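/- arXiv:2208.07453 — 4 statements merged into one kernel-verified Lean document; each statement's English description precedes it below -/
import Mathlib

section
/- Let g(s) = Σ_{v=0}^k binom(k,v)(−1)^v (v−s)_+^{H−1/β} with parameters H ∈ (0,1), β ∈ (0,2], and order of differencing k ∈ N satisfying k > H + 1/β. Then there is a constant C such that |g(s)| ≤ C |s|^{H − k − 1/β} for all s ≤ −1. -/
/-!
The kernel is, up to the sign `(-1)^k`, the `k`-th forward difference of `t ↦ t^α`,
`α = H - 1/β`, evaluated at `-s ≥ 1`. Differencing commutes with differentiation, and
`d/dt t^α = α t^(α-1)`, so by the mean value theorem each difference costs one power of `t`: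
induction on `k` (with `α` varying) gives `|Δ^k t^α| ≤ C t^(α-k)` for `t ≥ 1`.
-/

open Finset Set
open scoped fwdDiff

lemma hasDerivAt_fwdDiff_iter {f f' : ℝ → ℝ} {s : Set ℝ} {h : ℝ} (hs : ∀ x ∈ s, x + h ∈ s)
    (hf : ∀ x ∈ s, HasDerivAt f (f' x) x) (n : ℕ) :
    ∀ x ∈ s, HasDerivAt (Δ_[h] ^[n] f) (Δ_[h] ^[n] f' x) x := by
  induction n with
  | zero => simpa using hf
  | succ n ih =>
    intro x hx
    rw [Function.iterate_succ', Function.comp_apply, Function.comp_apply]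
    exact ((ih (x + h) (hs x hx)).comp_add_const x h).sub (ih x hx)

lemma abs_fwdDiff_le_of_abs_deriv_le {g g' : ℝ → ℝ} {x M : ℝ}
    (hg : ∀ t ∈ Icc x (x + 1), HasDerivAt g (g' t) t) (hM : ∀ t ∈ Icc x (x + 1), |g' t| ≤ M) :
    |Δ_[1] g x| ≤ M := by
  have := norm_image_sub_le_of_norm_deriv_le_segment' (fun t ht => (hg t ht).hasDerivWithinAt)
    (fun t ht => hM t (Ico_subset_Icc_self ht)) (x + 1) (right_mem_Icc.2 (by linarith))
  simpa [fwdDiff] using this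

lemma rpow_le_two_rpow_abs_mul_rpow {x t : ℝ} (hx : 0 < x) (hxt : x ≤ t) (ht : t ≤ 2 * x) (e : ℝ) :
    t ^ e ≤ 2 ^ |e| * x ^ e := by
  rcases le_or_gt 0 e with he | he
  · calc t ^ e ≤ (2 * x) ^ e := Real.rpow_le_rpow (by linarith) ht he
      _ = 2 ^ |e| * x ^ e := by rw [Real.mul_rpow zero_le_two hx.le, abs_of_nonneg he]
  · calc t ^ e ≤ 1 * x ^ e := by simpa using Real.rpow_le_rpow_of_nonpos hx hxt he.le
      _ ≤ 2 ^ |e| * x ^ e := by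
        gcongr
        exact Real.one_le_rpow one_le_two (abs_nonneg e)

lemma hasDerivAt_fwdDiff_iter_rpow (n : ℕ) (α : ℝ) {x : ℝ} (hx : 0 < x) :
    HasDerivAt (Δ_[1] ^[n] (fun t : ℝ => t ^ α))
      (α * Δ_[1] ^[n] (fun t : ℝ => t ^ (α - 1)) x) x := by
  have hderiv : ∀ t ∈ Ioi (0 : ℝ),
      HasDerivAt (fun t : ℝ => t ^ α) ((α • fun t : ℝ => t ^ (α - 1)) t) t :=
    fun t ht => Real.hasDerivAt_rpow_const (Or.inl (ne_of_gt ht))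
  simpa [fwdDiff_iter_const_smul] using
    hasDerivAt_fwdDiff_iter (fun t (ht : 0 < t) => add_pos ht one_pos) hderiv n x hx

lemma abs_fwdDiff_iter_rpow_le (n : ℕ) (α : ℝ) :
    ∃ C > 0, ∀ x : ℝ, 1 ≤ x → |Δ_[1] ^[n] (fun t : ℝ => t ^ α) x| ≤ C * x ^ (α - n) := by
  induction n generalizing α with
  | zero =>
    refine ⟨1, one_pos, fun x hx => ?_⟩
    simp [abs_of_nonneg (Real.rpow_nonneg (zero_le_one.trans hx) α)]
  | succ n ih =>
    obtain ⟨C, hC, hbound⟩ := ih (α - 1)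
    set e := α - 1 - n
    refine ⟨|α| * C * 2 ^ |e| + 1, by positivity, fun x hx => ?_⟩
    have hx0 : 0 < x := one_pos.trans_le hx
    have hderiv_le : ∀ t ∈ Icc x (x + 1),
        |α * Δ_[1] ^[n] (fun t : ℝ => t ^ (α - 1)) t| ≤ |α| * C * 2 ^ |e| * x ^ e := by
      rintro t ⟨hxt, htx⟩
      calc |α * Δ_[1] ^[n] (fun t : ℝ => t ^ (α - 1)) t|
          ≤ |α| * (C * t ^ e) := by rw [abs_mul]; gcongr; exact hbound t (hx.trans hxt)
        _ ≤ |α| * (C * (2 ^ |e| * x ^ e)) := by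
          gcongr; exact rpow_le_two_rpow_abs_mul_rpow hx0 hxt (by linarith) e
        _ = |α| * C * 2 ^ |e| * x ^ e := by ring
    have hstep := abs_fwdDiff_le_of_abs_deriv_le
      (fun t ht => hasDerivAt_fwdDiff_iter_rpow n α (hx0.trans_le ht.1)) hderiv_le
    rw [Function.iterate_succ_apply']
    calc _ ≤ |α| * C * 2 ^ |e| * x ^ e := hstep
      _ ≤ (|α| * C * 2 ^ |e| + 1) * x ^ (α - ↑(n + 1)) := by
        rw [show α - ↑(n + 1) = e by push_cast; ring]
        gcongr
        linarith

lemma sum_choose_mul_neg_one_pow_mul_eq_fwdDiff_iter (f : ℝ → ℝ) (k : ℕ) (y : ℝ) :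
    ∑ v ∈ range (k + 1), (k.choose v : ℝ) * (-1) ^ v * f (y + v) = (-1) ^ k * Δ_[1] ^[k] f y := by
  rw [fwdDiff_iter_eq_sum_shift, mul_sum]
  refine sum_congr rfl fun v hv => ?_
  have hsign : (-1 : ℝ) ^ k * (-1) ^ (k - v) = (-1) ^ v := by
    rw [← Nat.sub_add_cancel (Nat.le_of_lt_succ (mem_range.1 hv)), pow_add, Nat.add_sub_cancel,
      mul_right_comm, ← mul_pow]
    norm_num
  rw [zsmul_eq_mul, nsmul_one]
  push_cast
  rw [← hsign]; ring

theorem stmt6_general (H β : ℝ) (k : ℕ) :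
    ∃ C : ℝ, 0 < C ∧ ∀ s : ℝ, s ≤ -1 →
      |∑ v ∈ Finset.range (k + 1),
          (k.choose v : ℝ) * (-1 : ℝ) ^ v * max ((v : ℝ) - s) 0 ^ (H - 1 / β)|
        ≤ C * |s| ^ (H - (k : ℝ) - 1 / β) := by
  obtain ⟨C, hC, hbound⟩ := abs_fwdDiff_iter_rpow_le k (H - 1 / β)
  refine ⟨C, hC, fun s hs => ?_⟩
  have hkernel : ∑ v ∈ Finset.range (k + 1),
      (k.choose v : ℝ) * (-1 : ℝ) ^ v * max ((v : ℝ) - s) 0 ^ (H - 1 / β)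
      = (-1) ^ k * Δ_[1] ^[k] (fun t : ℝ => t ^ (H - 1 / β)) (-s) := by
    rw [← sum_choose_mul_neg_one_pow_mul_eq_fwdDiff_iter]
    refine sum_congr rfl fun v _ => ?_
    rw [max_eq_left (by linarith [v.cast_nonneg (α := ℝ)]), neg_add_eq_sub]
  rw [hkernel, abs_mul, abs_pow, abs_neg, abs_one, one_pow, one_mul,
    abs_of_neg (by linarith : s < 0), show H - k - 1 / β = H - 1 / β - k by ring]
  exact hbound (-s) (by linarith)

/-- The `k`-th order differenced lfsm kernel
`g(s) = Σ_{v=0}^k C(k,v) (−1)^v (v−s)₊^{H−1/β}` with `H ∈ (0,1)`, `β ∈ (0,2]`,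
`k > H + 1/β` satisfies `|g(s)| ≤ C |s|^{H−k−1/β}` for all `s ≤ −1`. -/
theorem stmt6 (H β : ℝ) (hH : H ∈ Set.Ioo (0:ℝ) 1) (hβ : β ∈ Set.Ioc (0:ℝ) 2)
    (k : ℕ) (hk : H + 1 / β < (k : ℝ)) :
    ∃ C : ℝ, 0 < C ∧ ∀ s : ℝ, s ≤ -1 →
      |∑ v ∈ Finset.range (k + 1),
          (k.choose v : ℝ) * (-1 : ℝ) ^ v * max ((v : ℝ) - s) 0 ^ (H - 1 / β)|
        ≤ C * |s| ^ (H - (k : ℝ) - 1 / β) :=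
  stmt6_general H β k
end

section
/- Let H ∈ (0,1) and consider the 4×4 matrix M with entries M_{i,1} = γ_i^{2H_1}, M_{i,2} = γ_i^{2H_1} log₂(γ_i), M_{i,3} = γ_i^{2H_2}, M_{i,4} = γ_i^{2H_2} log₂(γ_i) for (γ_1,…,γ_4) = (1,2,4,8). Then det M = 2^{2H_1 + 2H_2} (2^{H_1} − 2^{H_2})^4 (2^{H_1} + 2^{H_2})^4; in particular M is invertible if and only if H_1 ≠ H_2. -/
open Real

private lemma two_rpow_nat_mul (H : ℝ) (n : ℕ) :
    (2:ℝ) ^ ((n:ℝ) * H) = ((2:ℝ) ^ H) ^ n := by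
  rw [mul_comm, Real.rpow_mul (by norm_num), Real.rpow_natCast]

private lemma det_fin_four' (A : Matrix (Fin 4) (Fin 4) ℝ) : A.det =
    A 0 0 * (A 1 1 * (A 2 2 * A 3 3 - A 2 3 * A 3 2) - A 1 2 * (A 2 1 * A 3 3 - A 2 3 * A 3 1)
      + A 1 3 * (A 2 1 * A 3 2 - A 2 2 * A 3 1))
  - A 0 1 * (A 1 0 * (A 2 2 * A 3 3 - A 2 3 * A 3 2) - A 1 2 * (A 2 0 * A 3 3 - A 2 3 * A 3 0)
      + A 1 3 * (A 2 0 * A 3 2 - A 2 2 * A 3 0))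
  + A 0 2 * (A 1 0 * (A 2 1 * A 3 3 - A 2 3 * A 3 1) - A 1 1 * (A 2 0 * A 3 3 - A 2 3 * A 3 0)
      + A 1 3 * (A 2 0 * A 3 1 - A 2 1 * A 3 0))
  - A 0 3 * (A 1 0 * (A 2 1 * A 3 2 - A 2 2 * A 3 1) - A 1 1 * (A 2 0 * A 3 2 - A 2 2 * A 3 0)
      + A 1 2 * (A 2 0 * A 3 1 - A 2 1 * A 3 0)) := by
  rw [Matrix.det_succ_row_zero, Fin.sum_univ_four]
  have e3 : (Fin.succ 2 : Fin 4) = 3 := rfl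
  simp (config := { decide := true }) [Matrix.det_fin_three, Matrix.submatrix_apply,
    Fin.succAbove, Fin.lt_def, e3, show ((2:Fin 3).castSucc = (2:Fin 4)) from rfl]
  ring

/-- For the design `(γ₁,…,γ₄) = (1,2,4,8)`, the 4×4 matrix with
rows `(γᵢ^{2H₁}, γᵢ^{2H₁} log₂ γᵢ, γᵢ^{2H₂}, γᵢ^{2H₂} log₂ γᵢ)` has determinant
`2^{2H₁+2H₂} (2^{H₁} − 2^{H₂})⁴ (2^{H₁} + 2^{H₂})⁴`; in particular it is
invertible iff `H₁ ≠ H₂`. -/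
theorem stmt11 (H₁ H₂ : ℝ) (hH₁ : H₁ ∈ Set.Ioo (0:ℝ) 1) (hH₂ : H₂ ∈ Set.Ioo (0:ℝ) 1)
    (γ : Fin 4 → ℝ) (hγ : γ = ![1, 2, 4, 8])
    (M : Matrix (Fin 4) (Fin 4) ℝ)
    (hM : M = Matrix.of fun i =>
      ![γ i ^ (2 * H₁), γ i ^ (2 * H₁) * logb 2 (γ i),
        γ i ^ (2 * H₂), γ i ^ (2 * H₂) * logb 2 (γ i)]) :
    M.det = 2 ^ (2 * H₁ + 2 * H₂) * ((2:ℝ) ^ H₁ - 2 ^ H₂) ^ 4 * ((2:ℝ) ^ H₁ + 2 ^ H₂) ^ 4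
      ∧ (IsUnit M ↔ H₁ ≠ H₂) := by
  set a : ℝ := (2:ℝ) ^ H₁ with ha
  set b : ℝ := (2:ℝ) ^ H₂ with hb
  have ha0 : 0 < a := Real.rpow_pos_of_pos (by norm_num) _
  have hb0 : 0 < b := Real.rpow_pos_of_pos (by norm_num) _
  -- logb values
  have l1 : logb 2 (1:ℝ) = 0 := by simp
  have l2 : logb 2 (2:ℝ) = 1 := Real.logb_self_eq_one (by norm_num)
  have l4 : logb 2 (4:ℝ) = 2 := by
    rw [show (4:ℝ) = 2 ^ (2:ℕ) by norm_num, Real.logb_pow, l2]; norm_num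
  have l8 : logb 2 (8:ℝ) = 3 := by
    rw [show (8:ℝ) = 2 ^ (3:ℕ) by norm_num, Real.logb_pow, l2]; norm_num
  -- rpow values
  have p1₁ : (1:ℝ) ^ (2*H₁) = 1 := Real.one_rpow _
  have p1₂ : (1:ℝ) ^ (2*H₂) = 1 := Real.one_rpow _
  have p2₁ : (2:ℝ) ^ (2*H₁) = a ^ 2 := by
    rw [ha, ← two_rpow_nat_mul H₁ 2]; norm_num
  have p2₂ : (2:ℝ) ^ (2*H₂) = b ^ 2 := by
    rw [hb, ← two_rpow_nat_mul H₂ 2]; norm_num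
  have p4₁ : (4:ℝ) ^ (2*H₁) = a ^ 4 := by
    rw [ha, show (4:ℝ) = 2 ^ ((2:ℕ):ℝ) by rw [Real.rpow_natCast]; norm_num,
      ← Real.rpow_mul (by norm_num),
      show ((2:ℕ):ℝ)*(2*H₁) = ((4:ℕ):ℝ)*H₁ by push_cast; ring,
      two_rpow_nat_mul]
  have p4₂ : (4:ℝ) ^ (2*H₂) = b ^ 4 := by
    rw [hb, show (4:ℝ) = 2 ^ ((2:ℕ):ℝ) by rw [Real.rpow_natCast]; norm_num,
      ← Real.rpow_mul (by norm_num),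
      show ((2:ℕ):ℝ)*(2*H₂) = ((4:ℕ):ℝ)*H₂ by push_cast; ring,
      two_rpow_nat_mul]
  have p8₁ : (8:ℝ) ^ (2*H₁) = a ^ 6 := by
    rw [ha, show (8:ℝ) = 2 ^ ((3:ℕ):ℝ) by rw [Real.rpow_natCast]; norm_num,
      ← Real.rpow_mul (by norm_num),
      show ((3:ℕ):ℝ)*(2*H₁) = ((6:ℕ):ℝ)*H₁ by push_cast; ring,
      two_rpow_nat_mul]
  have p8₂ : (8:ℝ) ^ (2*H₂) = b ^ 6 := by
    rw [hb, show (8:ℝ) = 2 ^ ((3:ℕ):ℝ) by rw [Real.rpow_natCast]; norm_num,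
      ← Real.rpow_mul (by norm_num),
      show ((3:ℕ):ℝ)*(2*H₂) = ((6:ℕ):ℝ)*H₂ by push_cast; ring,
      two_rpow_nat_mul]
  have prhs : (2:ℝ) ^ (2*H₁ + 2*H₂) = a ^ 2 * b ^ 2 := by
    rw [Real.rpow_add (by norm_num), p2₁, p2₂]
  have hdet : M.det = a ^ 2 * b ^ 2 * (a - b) ^ 4 * (a + b) ^ 4 := by
    subst hγ hM
    rw [det_fin_four']
    simp only [Matrix.of_apply, Matrix.cons_val', Matrix.cons_val_zero, Matrix.cons_val_one,
      Matrix.head_cons, Matrix.cons_val_two, Matrix.tail_cons, Matrix.cons_val_three,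
      Matrix.empty_val', Matrix.cons_val_fin_one, Matrix.head_fin_const]
    rw [l1, l2, l4, l8, p1₁, p1₂, p2₁, p2₂, p4₁, p4₂, p8₁, p8₂]
    ring
  have hab : a = b ↔ H₁ = H₂ := by
    constructor
    · intro h
      have h1 : H₁ ≤ H₂ := (Real.rpow_le_rpow_left_iff (x := 2) (by norm_num)).mp h.le
      have h2 : H₂ ≤ H₁ := (Real.rpow_le_rpow_left_iff (x := 2) (by norm_num)).mp h.ge
      exact le_antisymm h1 h2
    · rintro rfl; exact ha.trans hb.symm
  refine ⟨by rw [hdet, prhs], ?_⟩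
  rw [Matrix.isUnit_iff_isUnit_det, isUnit_iff_ne_zero, hdet]
  constructor
  · intro h heq
    exact h (by rw [hab.mpr heq]; ring)
  · intro h hz
    apply h
    have hne : a ^ 2 * b ^ 2 * (a + b) ^ 4 ≠ 0 := by positivity
    have : (a - b) ^ 4 = 0 := by
      by_contra h4
      exact absurd hz (by
        have := mul_ne_zero (mul_ne_zero (mul_ne_zero (pow_ne_zero 2 ha0.ne') (pow_ne_zero 2 hb0.ne')) h4) (pow_ne_zero 4 (by positivity : (0:ℝ) < a + b).ne')
        simpa [mul_assoc, mul_comm, mul_left_comm] using this)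
    exact hab.mp (by nlinarith [pow_eq_zero_iff (n := 4) (by norm_num : (4:ℕ) ≠ 0) |>.mp this])
end

section
/- Let (β_1, H_1), (β_2, H_2) ∈ (0,∞) × (0,1), and consider the 6×6 matrix M' with rows indexed by i=1,…,6 given by M'_{i,(3j−2,3j−1,3j)} = γ_i^{β_j H_j} λ_i^{β_j} (1, log₂ γ_i, log₂ λ_i) for j = 1,2, with (γ_1,…,γ_6) = (1,2,2,4,8,8) and (λ_1,…,λ_6) = (1,1,2,1,1,2). Then det M' = −2^{β_1 + β_2 + 2H_1β_1 + 2H_2β_2} (2^{H_1β_1} − 2^{H_2β_2})^5 (2^{H_1β_1} + 2^{H_2β_2}); in particular M' is regular if and only if H_1β_1 ≠ H_2β_2. -/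
open Real

/-!
Since every `γᵢ = 2 ^ pᵢ` and `λᵢ = 2 ^ qᵢ`, with `(p, q)` running through
`(0,0), (1,0), (1,1), (2,0), (3,0), (3,1)`, the row `i` of `M'` is
`(a^pᵢ b^qᵢ (1, pᵢ, qᵢ), c^pᵢ d^qᵢ (1, pᵢ, qᵢ))` with `a = 2^{H₁β₁}`, `b = 2^{β₁}`,
`c = 2^{H₂β₂}`, `d = 2^{β₂}`. Its determinant is then a polynomial identity in `a, b, c, d`,
and since `a, b, c, d > 0` it vanishes exactly when `a = c`, i.e. when `H₁β₁ = H₂β₂`.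
-/

def expDesignMatrix {R : Type*} [CommRing R] (a b c d : R) (p q : Fin 6 → ℕ) :
    Matrix (Fin 6) (Fin 6) R :=
  Matrix.of fun i =>
    ![a ^ p i * b ^ q i, a ^ p i * b ^ q i * p i, a ^ p i * b ^ q i * q i,
      c ^ p i * d ^ q i, c ^ p i * d ^ q i * p i, c ^ p i * d ^ q i * q i]

theorem det_expDesignMatrix {R : Type*} [CommRing R] (a b c d : R) :
    (expDesignMatrix a b c d ![0, 1, 1, 2, 3, 3] ![0, 0, 1, 0, 0, 1]).det
      = -(b * d * a ^ 2 * c ^ 2 * (a - c) ^ 5 * (a + c)) := by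
  simp [expDesignMatrix, Matrix.det_succ_row_zero, Fin.sum_univ_succ, Fin.succAbove]
  ring

theorem isUnit_expDesignMatrix_iff {R : Type*} [Field R] [LinearOrder R] [IsStrictOrderedRing R]
    {a b c d : R} (ha : 0 < a) (hb : 0 < b) (hc : 0 < c) (hd : 0 < d) :
    IsUnit (expDesignMatrix a b c d ![0, 1, 1, 2, 3, 3] ![0, 0, 1, 0, 0, 1]) ↔ a ≠ c := by
  have hac : a + c ≠ 0 := (add_pos ha hc).ne'
  rw [Matrix.isUnit_iff_isUnit_det, isUnit_iff_ne_zero, det_expDesignMatrix]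
  simp [ha.ne', hb.ne', hc.ne', hd.ne', hac, sub_eq_zero]

theorem of_two_pow_rows_eq_expDesignMatrix (p q : Fin 6 → ℕ) (s₁ t₁ s₂ t₂ : ℝ) :
    (Matrix.of fun i =>
      ![((2:ℝ) ^ p i) ^ s₁ * ((2:ℝ) ^ q i) ^ t₁,
        ((2:ℝ) ^ p i) ^ s₁ * ((2:ℝ) ^ q i) ^ t₁ * logb 2 (2 ^ p i),
        ((2:ℝ) ^ p i) ^ s₁ * ((2:ℝ) ^ q i) ^ t₁ * logb 2 (2 ^ q i),
        ((2:ℝ) ^ p i) ^ s₂ * ((2:ℝ) ^ q i) ^ t₂,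
        ((2:ℝ) ^ p i) ^ s₂ * ((2:ℝ) ^ q i) ^ t₂ * logb 2 (2 ^ p i),
        ((2:ℝ) ^ p i) ^ s₂ * ((2:ℝ) ^ q i) ^ t₂ * logb 2 (2 ^ q i)])
      = expDesignMatrix (2 ^ s₁) (2 ^ t₁) (2 ^ s₂) (2 ^ t₂) p q := by
  simp only [← rpow_pow_comm zero_le_two, logb_pow, logb_self_eq_one one_lt_two, mul_one]
  rfl

theorem two_rpow_add_eq (β₁ β₂ H₁ H₂ : ℝ) :
    (2:ℝ) ^ (β₁ + β₂ + 2 * H₁ * β₁ + 2 * H₂ * β₂)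
      = 2 ^ β₁ * 2 ^ β₂ * ((2:ℝ) ^ (H₁ * β₁)) ^ 2 * ((2:ℝ) ^ (H₂ * β₂)) ^ 2 := by
  simp only [← rpow_natCast, ← rpow_mul zero_le_two, ← rpow_add two_pos]
  ring_nf

theorem stmt12_general (β₁ β₂ H₁ H₂ : ℝ)
    (γ lam : Fin 6 → ℝ) (hγ : γ = ![1, 2, 2, 4, 8, 8]) (hlam : lam = ![1, 1, 2, 1, 1, 2])
    (M : Matrix (Fin 6) (Fin 6) ℝ)
    (hM : M = Matrix.of fun i =>
      ![γ i ^ (β₁ * H₁) * lam i ^ β₁,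
        γ i ^ (β₁ * H₁) * lam i ^ β₁ * logb 2 (γ i),
        γ i ^ (β₁ * H₁) * lam i ^ β₁ * logb 2 (lam i),
        γ i ^ (β₂ * H₂) * lam i ^ β₂,
        γ i ^ (β₂ * H₂) * lam i ^ β₂ * logb 2 (γ i),
        γ i ^ (β₂ * H₂) * lam i ^ β₂ * logb 2 (lam i)]) :
    M.det = -(2 ^ (β₁ + β₂ + 2 * H₁ * β₁ + 2 * H₂ * β₂)
        * ((2:ℝ) ^ (H₁ * β₁) - 2 ^ (H₂ * β₂)) ^ 5
        * ((2:ℝ) ^ (H₁ * β₁) + 2 ^ (H₂ * β₂)))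
      ∧ (IsUnit M ↔ H₁ * β₁ ≠ H₂ * β₂) := by
  have hγ₂ : γ = fun i => (2:ℝ) ^ (![0, 1, 1, 2, 3, 3] i) := by
    subst hγ; funext i; fin_cases i <;> norm_num
  have hlam₂ : lam = fun i => (2:ℝ) ^ (![0, 0, 1, 0, 0, 1] i) := by
    subst hlam; funext i; fin_cases i <;> norm_num
  rw [hγ₂, hlam₂, of_two_pow_rows_eq_expDesignMatrix, mul_comm β₁ H₁, mul_comm β₂ H₂] at hM
  subst hM
  refine ⟨by rw [det_expDesignMatrix, two_rpow_add_eq], ?_⟩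
  rw [isUnit_expDesignMatrix_iff (by positivity) (by positivity) (by positivity) (by positivity),
    Ne, Ne, rpow_right_inj two_pos (by norm_num)]

/-- For the design `(γ₁,…,γ₆) = (1,2,2,4,8,8)` and
`(λ₁,…,λ₆) = (1,1,2,1,1,2)`, the 6×6 matrix with rows
`γᵢ^{β_j H_j} λᵢ^{β_j} (1, log₂ γᵢ, log₂ λᵢ)`, `j = 1,2`, has determinant
`−2^{β₁+β₂+2H₁β₁+2H₂β₂} (2^{H₁β₁} − 2^{H₂β₂})⁵ (2^{H₁β₁} + 2^{H₂β₂})`;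
in particular it is regular iff `H₁β₁ ≠ H₂β₂`. -/
theorem stmt12 (β₁ β₂ H₁ H₂ : ℝ) (hβ₁ : 0 < β₁) (hβ₂ : 0 < β₂)
    (hH₁ : H₁ ∈ Set.Ioo (0:ℝ) 1) (hH₂ : H₂ ∈ Set.Ioo (0:ℝ) 1)
    (γ lam : Fin 6 → ℝ) (hγ : γ = ![1, 2, 2, 4, 8, 8]) (hlam : lam = ![1, 1, 2, 1, 1, 2])
    (M : Matrix (Fin 6) (Fin 6) ℝ)
    (hM : M = Matrix.of fun i =>
      ![γ i ^ (β₁ * H₁) * lam i ^ β₁,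
        γ i ^ (β₁ * H₁) * lam i ^ β₁ * logb 2 (γ i),
        γ i ^ (β₁ * H₁) * lam i ^ β₁ * logb 2 (lam i),
        γ i ^ (β₂ * H₂) * lam i ^ β₂,
        γ i ^ (β₂ * H₂) * lam i ^ β₂ * logb 2 (γ i),
        γ i ^ (β₂ * H₂) * lam i ^ β₂ * logb 2 (lam i)]) :
    M.det = -(2 ^ (β₁ + β₂ + 2 * H₁ * β₁ + 2 * H₂ * β₂)
        * ((2:ℝ) ^ (H₁ * β₁) - 2 ^ (H₂ * β₂)) ^ 5
        * ((2:ℝ) ^ (H₁ * β₁) + 2 ^ (H₂ * β₂)))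
      ∧ (IsUnit M ↔ H₁ * β₁ ≠ H₂ * β₂) :=
  stmt12_general β₁ β₂ H₁ H₂ γ lam hγ hlam M hM
end

section
/- Under the assumptions of the estimating-equations existence theorem (conditions (E.1)' and (E.2)'), the solution sequence θ̂_n with P(F_n(θ̂_n)=0) → 1 and ‖θ̂_n − θ₀‖ ≤ r_n (with probability tending to 1) is locally unique: for any other sequence θ̃_n with P(F_n(θ̃_n)=0) → 1 and P(‖θ̃_n − θ₀‖ ≤ r_n) → 1, one has P(θ̂_n = θ̃_n) → 1. -/
/-!
Fix `c > 0` with `c < ‖W⁻¹‖⁻¹`. Whenever `‖B_n DF_n(θ) C_n - W‖ < c` on the whole ball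
`closedBall θ₀ r_n`, the mean value inequality shows that `u ↦ B_n F_n(C_n u)` approximates the
invertible `W` on the convex preimage of the ball, so it is injective there and `F_n` has at most
one zero in the ball. By (E.2)' this event has probability tending to one. Intersecting it with
the events `F_n(θ̂_n) = 0`, `‖θ̂_n - θ₀‖ ≤ r_n` and their analogues for `θ̃_n` keeps the
probability tending to one, because one set of each intersection is measurable; on the
intersection `θ̂_n = θ̃_n`.
-/

open MeasureTheory Metric Set Filter Topology TopologicalSpace
open scoped NNReal

section Deterministic

variable {E E' F G : Type*}
  [NormedAddCommGroup E] [NormedSpace ℝ E] [NormedAddCommGroup E'] [NormedSpace ℝ E']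
  [NormedAddCommGroup F] [NormedSpace ℝ F] [NormedAddCommGroup G] [NormedSpace ℝ G]

theorem ContinuousLinearEquiv.exists_pos_subsingleton_or_lt_inv_nnnorm_symm (W : E ≃L[ℝ] G) :
    ∃ c : ℝ≥0, 0 < c ∧ (Subsingleton E ∨ c < ‖(W.symm : G →L[ℝ] E)‖₊⁻¹) := by
  rcases W.subsingleton_or_nnnorm_symm_pos with hE | hpos
  · exact ⟨1, one_pos, Or.inl hE⟩
  · exact ⟨_ / 2, half_pos (inv_pos.2 hpos), Or.inr (NNReal.half_lt_self (inv_pos.2 hpos).ne')⟩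

theorem Convex.injOn_comp_of_norm_comp_fderiv_comp_sub_le {s : Set E} (hs : Convex ℝ s)
    {f : E → F} {f' : E → E →L[ℝ] F} (hf : ∀ x ∈ s, HasFDerivWithinAt f (f' x) s x)
    (B : F →L[ℝ] G) (C : E' ≃L[ℝ] E) (W : E' ≃L[ℝ] G) {c : ℝ≥0}
    (hc : Subsingleton E' ∨ c < ‖(W.symm : G →L[ℝ] E')‖₊⁻¹)
    (hder : ∀ x ∈ s, ‖B.comp ((f' x).comp (C : E' →L[ℝ] E)) - (W : E' →L[ℝ] G)‖ ≤ c) :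
    InjOn (B ∘ f) s := by
  have hconv : Convex ℝ (C ⁻¹' s) := hs.linear_preimage (C : E' →ₗ[ℝ] E)
  have hderiv : ∀ u ∈ C ⁻¹' s, HasFDerivWithinAt (B ∘ f ∘ C)
      (B.comp ((f' (C u)).comp (C : E' →L[ℝ] E))) (C ⁻¹' s) u := fun u hu =>
    B.hasFDerivAt.comp_hasFDerivWithinAt u
      ((hf (C u) hu).comp u C.hasFDerivAt.hasFDerivWithinAt (mapsTo_preimage C s))
  have happrox : ApproximatesLinearOn (B ∘ f ∘ C) (W : E' →L[ℝ] G) (C ⁻¹' s) c :=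
    fun u hu v hv => hconv.norm_image_sub_le_of_norm_hasFDerivWithin_le' hderiv
      (fun w hw => hder (C w) hw) hv hu
  intro x hx y hy hxy
  have := happrox.injOn hc (show C.symm x ∈ C ⁻¹' s by simpa using hx)
    (show C.symm y ∈ C ⁻¹' s by simpa using hy) (by simpa using hxy)
  simpa using congrArg C this

end Deterministic

section Measurability

variable {Ω X Y : Type*} [MeasurableSpace Ω]
  [TopologicalSpace X] [MetrizableSpace X] [SecondCountableTopology X] [MeasurableSpace X]
  [BorelSpace X] [TopologicalSpace Y] [PseudoMetrizableSpace Y] [MeasurableSpace Y] [BorelSpace Y]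
  {f : Ω → X → Y} {K : Set X}

theorem measurable_apply_of_continuousOn_of_mem (hf : ∀ x, Measurable (f · x))
    (hcont : ∀ ω, ContinuousOn (f ω) K) {g : Ω → X} (hg : Measurable g) (hgK : ∀ ω, g ω ∈ K) :
    Measurable fun ω => f ω (g ω) :=
  (measurable_uncurry_of_continuous_of_measurable (u := fun (x : K) ω => f ω x)
      (fun ω => (hcont ω).domRestrict) (fun x => hf x)).comp
    ((hg.subtype_mk (h := hgK)).prodMk measurable_id)

theorem measurableSet_setOf_mem_and_apply_mem (hK : MeasurableSet K)
    (hf : ∀ x, Measurable (f · x)) (hcont : ∀ ω, ContinuousOn (f ω) K) {g : Ω → X}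
    (hg : Measurable g) {t : Set Y} (ht : MeasurableSet t) :
    MeasurableSet {ω | g ω ∈ K ∧ f ω (g ω) ∈ t} := by
  classical
  rcases K.eq_empty_or_nonempty with rfl | ⟨x₀, hx₀⟩
  · simp
  set g' : Ω → X := fun ω => if g ω ∈ K then g ω else x₀
  have hg' : Measurable g' := Measurable.ite (hg hK) hg measurable_const
  have hg'K : ∀ ω, g' ω ∈ K := fun ω => by by_cases h : g ω ∈ K <;> simp [g', h, hx₀]
  have heq : {ω | g ω ∈ K ∧ f ω (g ω) ∈ t} = g ⁻¹' K ∩ (fun ω => f ω (g' ω)) ⁻¹' t := by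
    ext ω
    by_cases h : g ω ∈ K <;> simp [g', h]
  rw [heq]
  exact (hg hK).inter
    (measurable_apply_of_continuousOn_of_mem hf hcont hg' hg'K ht)

end Measurability

section Probability

variable {Ω ι : Type*} [MeasurableSpace Ω] {P : Measure Ω} [IsProbabilityMeasure P]
  {l : Filter ι} {s t : ι → Set Ω}

theorem tendsto_measureReal_one_of_le {a : ι → ℝ} (ha : Tendsto a l (𝓝 1))
    (hle : ∀ i, a i ≤ P.real (s i)) : Tendsto (fun i => P.real (s i)) l (𝓝 1) :=
  tendsto_of_tendsto_of_tendsto_of_le_of_le ha tendsto_const_nhds hle fun _ => measureReal_le_one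

theorem tendsto_measureReal_one_of_subset (hs : Tendsto (fun i => P.real (s i)) l (𝓝 1))
    (hst : ∀ i, s i ⊆ t i) : Tendsto (fun i => P.real (t i)) l (𝓝 1) :=
  tendsto_measureReal_one_of_le hs fun i => measureReal_mono (hst i)

theorem Filter.Tendsto.measureReal_inter_one (hs : Tendsto (fun i => P.real (s i)) l (𝓝 1))
    (ht : Tendsto (fun i => P.real (t i)) l (𝓝 1)) (htm : ∀ i, MeasurableSet (t i)) :
    Tendsto (fun i => P.real (s i ∩ t i)) l (𝓝 1) := by
  refine tendsto_measureReal_one_of_le (a := fun i => P.real (s i) - (1 - P.real (t i)))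
    (by simpa using hs.sub ((tendsto_const_nhds (x := (1 : ℝ))).sub ht)) fun i => ?_
  calc P.real (s i) - (1 - P.real (t i))
      = P.real (s i) - P.real (t i)ᶜ := by rw [probReal_compl_eq_one_sub (htm i)]
    _ ≤ P.real (s i \ t i) + P.real (s i ∩ t i) - P.real (t i)ᶜ := by
      rw [measureReal_sdiff_add_inter (htm i)]
    _ ≤ P.real (s i ∩ t i) := by
      linarith [measureReal_mono (μ := P) (sdiff_subset_compl (s i) (t i))]

theorem Filter.Tendsto.measureReal_sdiff_one (hs : Tendsto (fun i => P.real (s i)) l (𝓝 1))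
    (ht : Tendsto (fun i => P.real (t i)) l (𝓝 0)) :
    Tendsto (fun i => P.real (s i \ t i)) l (𝓝 1) :=
  tendsto_measureReal_one_of_le (by simpa using hs.sub ht) fun _ => le_measureReal_sdiff

end Probability

theorem stmt14_general {d : ℕ} {Ω : Type*} [MeasurableSpace Ω] (P : Measure Ω) [IsProbabilityMeasure P]
    (Θ : Set (EuclideanSpace ℝ (Fin d)))
    (θ₀ : EuclideanSpace ℝ (Fin d))
    (F : ℕ → Ω → EuclideanSpace ℝ (Fin d) → EuclideanSpace ℝ (Fin d))
    (hFmeas : ∀ n θ, Measurable (fun ω => F n ω θ))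
    (hFC1 : ∀ n ω, ContDiffOn ℝ 1 (F n ω) Θ)
    (B C : ℕ → (EuclideanSpace ℝ (Fin d) ≃L[ℝ] EuclideanSpace ℝ (Fin d)))
    (W : EuclideanSpace ℝ (Fin d) ≃L[ℝ] EuclideanSpace ℝ (Fin d))
    (r : ℕ → ℝ)
    (hball : ∀ n, closedBall θ₀ (r n) ⊆ Θ)
    -- (E.2)', part 1
    (hE2a : ∀ ε : ℝ, 0 < ε → Filter.Tendsto
      (fun n => P {ω | ∃ θ ∈ closedBall θ₀ (r n),
        ε ≤ ‖((B n : EuclideanSpace ℝ (Fin d) →L[ℝ] EuclideanSpace ℝ (Fin d)).comp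
              ((fderivWithin ℝ (F n ω) Θ θ).comp
                (C n : EuclideanSpace ℝ (Fin d) →L[ℝ] EuclideanSpace ℝ (Fin d))))
            - (W : EuclideanSpace ℝ (Fin d) →L[ℝ] EuclideanSpace ℝ (Fin d))‖})
      Filter.atTop (nhds 0))
    -- the two candidate solution sequences
    (θhat θtil : ℕ → Ω → EuclideanSpace ℝ (Fin d))
    (hhatmeas : ∀ n, Measurable (θhat n)) (htilmeas : ∀ n, Measurable (θtil n))
    (hhatzero : Filter.Tendsto (fun n => (P {ω | F n ω (θhat n ω) = 0}).toReal)
      Filter.atTop (nhds 1))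
    (htilzero : Filter.Tendsto (fun n => (P {ω | F n ω (θtil n ω) = 0}).toReal)
      Filter.atTop (nhds 1))
    (hhatball : Filter.Tendsto (fun n => (P {ω | ‖θhat n ω - θ₀‖ ≤ r n}).toReal)
      Filter.atTop (nhds 1))
    (htilball : Filter.Tendsto (fun n => (P {ω | ‖θtil n ω - θ₀‖ ≤ r n}).toReal)
      Filter.atTop (nhds 1)) :
    Filter.Tendsto (fun n => (P {ω | θhat n ω = θtil n ω}).toReal)
      Filter.atTop (nhds 1) := by
  obtain ⟨c, hc0, hc⟩ := W.exists_pos_subsingleton_or_lt_inv_nnnorm_symm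
  have hhat := hhatzero.measureReal_inter_one hhatball fun n =>
    measurableSet_le ((hhatmeas n).sub measurable_const).norm measurable_const
  have htil := htilzero.measureReal_inter_one htilball fun n =>
    measurableSet_le ((htilmeas n).sub measurable_const).norm measurable_const
  have htil_meas (n : ℕ) :
      MeasurableSet ({ω | F n ω (θtil n ω) = 0} ∩ {ω | ‖θtil n ω - θ₀‖ ≤ r n}) := by
    convert measurableSet_setOf_mem_and_apply_mem isClosed_closedBall.measurableSet (hFmeas n)
      (fun ω => (hFC1 n ω).continuousOn.mono (hball n)) (htilmeas n)
      (measurableSet_singleton 0) using 1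
    ext ω
    simp only [mem_inter_iff, mem_ofPred_eq, mem_closedBall_iff_norm, mem_singleton_iff]
    exact and_comm
  have hbad := (ENNReal.tendsto_toReal ENNReal.zero_ne_top).comp (hE2a c (by positivity))
  simp only [Function.comp_def, ENNReal.toReal_zero, ← measureReal_def] at hbad
  refine tendsto_measureReal_one_of_subset
    ((hhat.measureReal_inter_one htil htil_meas).measureReal_sdiff_one hbad) ?_
  rintro n ω ⟨⟨⟨hzero, hnorm⟩, hzero', hnorm'⟩, hgood⟩
  simp only [mem_ofPred_eq, not_exists, not_and, not_le] at hgood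
  have hinj := (convex_closedBall θ₀ (r n)).injOn_comp_of_norm_comp_fderiv_comp_sub_le
    (G := EuclideanSpace ℝ (Fin d))
    (fun θ hθ => ((hFC1 n ω).differentiableOn one_ne_zero θ
      (hball n hθ)).hasFDerivWithinAt.mono (hball n))
    (B n) (C n) W hc fun θ hθ => (hgood θ hθ).le
  exact hinj (mem_closedBall_iff_norm.2 hnorm) (mem_closedBall_iff_norm.2 hnorm')
    (by simp only [Function.comp_apply, hzero.out, hzero'.out])

/-- Local uniqueness of solutions of estimating equations. Under
(E.1)' and (E.2)', any two sequences of random vectors `θ̂_n`, `θ̃_n` with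
`P(F_n(·) = 0) → 1` and `P(‖· − θ₀‖ ≤ r_n) → 1` coincide with probability
tending to one: `P(θ̂_n = θ̃_n) → 1`. -/
theorem stmt14 {d : ℕ} {Ω : Type*} [MeasurableSpace Ω] (P : Measure Ω) [IsProbabilityMeasure P]
    (Θ : Set (EuclideanSpace ℝ (Fin d))) (hΘ : IsOpen Θ)
    (θ₀ : EuclideanSpace ℝ (Fin d)) (hθ₀ : θ₀ ∈ Θ)
    (F : ℕ → Ω → EuclideanSpace ℝ (Fin d) → EuclideanSpace ℝ (Fin d))
    (hFmeas : ∀ n θ, Measurable (fun ω => F n ω θ))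
    (hFC1 : ∀ n ω, ContDiffOn ℝ 1 (F n ω) Θ)
    (A B C : ℕ → (EuclideanSpace ℝ (Fin d) ≃L[ℝ] EuclideanSpace ℝ (Fin d)))
    (W : EuclideanSpace ℝ (Fin d) ≃L[ℝ] EuclideanSpace ℝ (Fin d))
    (r : ℕ → ℝ) (hr : ∀ n, 0 < r n)
    (hball : ∀ n, closedBall θ₀ (r n) ⊆ Θ)
    -- (E.1)': A_n F_n(θ₀) = O_P(1)
    (hE1 : ∀ ε : ℝ, 0 < ε → ∃ M : ℝ, ∀ n,
      (P {ω | M < ‖(A n) (F n ω θ₀)‖}).toReal ≤ ε)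
    -- (E.2)', part 1
    (hE2a : ∀ ε : ℝ, 0 < ε → Filter.Tendsto
      (fun n => P {ω | ∃ θ ∈ closedBall θ₀ (r n),
        ε ≤ ‖((B n : EuclideanSpace ℝ (Fin d) →L[ℝ] EuclideanSpace ℝ (Fin d)).comp
              ((fderivWithin ℝ (F n ω) Θ θ).comp
                (C n : EuclideanSpace ℝ (Fin d) →L[ℝ] EuclideanSpace ℝ (Fin d))))
            - (W : EuclideanSpace ℝ (Fin d) →L[ℝ] EuclideanSpace ℝ (Fin d))‖})
      Filter.atTop (nhds 0))
    -- (E.2)', part 2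
    (hE2b : Filter.Tendsto
      (fun n => ‖(C n : EuclideanSpace ℝ (Fin d) →L[ℝ] EuclideanSpace ℝ (Fin d))‖
        * ‖((B n : EuclideanSpace ℝ (Fin d) →L[ℝ] EuclideanSpace ℝ (Fin d)).comp
            ((A n).symm : EuclideanSpace ℝ (Fin d) →L[ℝ] EuclideanSpace ℝ (Fin d)))‖
        / r n) Filter.atTop (nhds 0))
    -- the two candidate solution sequences
    (θhat θtil : ℕ → Ω → EuclideanSpace ℝ (Fin d))
    (hhatmeas : ∀ n, Measurable (θhat n)) (htilmeas : ∀ n, Measurable (θtil n))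
    (hhatzero : Filter.Tendsto (fun n => (P {ω | F n ω (θhat n ω) = 0}).toReal)
      Filter.atTop (nhds 1))
    (htilzero : Filter.Tendsto (fun n => (P {ω | F n ω (θtil n ω) = 0}).toReal)
      Filter.atTop (nhds 1))
    (hhatball : Filter.Tendsto (fun n => (P {ω | ‖θhat n ω - θ₀‖ ≤ r n}).toReal)
      Filter.atTop (nhds 1))
    (htilball : Filter.Tendsto (fun n => (P {ω | ‖θtil n ω - θ₀‖ ≤ r n}).toReal)
      Filter.atTop (nhds 1)) :
    Filter.Tendsto (fun n => (P {ω | θhat n ω = θtil n ω}).toReal)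
      Filter.atTop (nhds 1) :=
  stmt14_general P Θ θ₀ F hFmeas hFC1 B C W r hball hE2a θhat θtil hhatmeas htilmeas hhatzero
    htilzero hhatball htilball
end
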